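/- For every dimension d ≥ 2 there is a constant C_d such that for every integer n ≥ 1 and every choice of real coefficients α(R), one for each dyadic rectangle R ⊂ [0,1]^d with |R| ≥ 2^{-n}, one has Σ_{|R| = 2^{-n}} |α(R)| · |R| ≤ C_d · n^{(d−1)/2} · ‖ Σ_{|R| ≥ 2^{-n}} α(R) h_R ‖_{L^∞([0,1]^d)}. -/

import Mathlib

open MeasureTheory
open scoped ENNReal Classical

/-- The `L^∞`-normalized Haar function of the dyadic interval `[j/2^k, (j+1)/2^k)`:
it is `-1` on the left half, `+1` on the right half, and `0` outside. -/
noncomputable def haar1 (k j : ℕ) (x : ℝ) : ℝ :=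
  if (j : ℝ) / 2 ^ k ≤ x ∧ x < ((j : ℝ) + 1 / 2) / 2 ^ k then -1
  else if ((j : ℝ) + 1 / 2) / 2 ^ k ≤ x ∧ x < ((j : ℝ) + 1) / 2 ^ k then 1
  else 0

/-- A dyadic rectangle in `[0,1]^d` is encoded by its levels `R.1` and positions `R.2`;
its `i`-th side interval is `[R.2 i / 2 ^ R.1 i, (R.2 i + 1) / 2 ^ R.1 i)`.
`haarR R` is the associated (tensor product) Haar function. -/
noncomputable def haarR {d : ℕ} (R : (Fin d → ℕ) × (Fin d → ℕ)) (x : Fin d → ℝ) : ℝ :=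
  ∏ i, haar1 (R.1 i) (R.2 i) (x i)

/-- The dyadic rectangles in `[0,1]^d` of volume exactly `2 ^ (-n)`. -/
def rectsEq (d n : ℕ) : Finset ((Fin d → ℕ) × (Fin d → ℕ)) :=
  ((Fintype.piFinset fun _ => Finset.range (n + 1)) ×ˢ
      (Fintype.piFinset fun _ => Finset.range (2 ^ n))).filter
    fun R => (∑ i, R.1 i) = n ∧ ∀ i, R.2 i < 2 ^ R.1 i

/-- The dyadic rectangles in `[0,1]^d` of volume at least `2 ^ (-n)`. -/
def rectsGe (d n : ℕ) : Finset ((Fin d → ℕ) × (Fin d → ℕ)) :=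
  ((Fintype.piFinset fun _ => Finset.range (n + 1)) ×ˢ
      (Fintype.piFinset fun _ => Finset.range (2 ^ n))).filter
    fun R => (∑ i, R.1 i) ≤ n ∧ ∀ i, R.2 i < 2 ^ R.1 i

/-- The unit cube `[0,1]^d`. -/
def unitCube (d : ℕ) : Set (Fin d → ℝ) := Set.univ.pi fun _ => Set.Icc 0 1

/-!
The Haar functions `h_R` of dyadic rectangles in `[0,1]^d` are orthogonal in `L²([0,1]^d)` with
`‖h_R‖₂² = |R|`, so Parseval and `‖f‖₂ ≤ ‖f‖∞` give `∑ α(R)² |R| ≤ ‖f‖∞²`. The rectangles of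
volume `2⁻ⁿ` come in at most `(n+1)^(d-1)` shapes with `2ⁿ` rectangles each, and Cauchy–Schwarz
over them yields `∑_{|R| = 2⁻ⁿ} |α(R)| |R| ≤ (n+1)^((d-1)/2) ‖f‖∞`.
-/

open Set

def dyadicIco (k p : ℕ) : Set ℝ := Ico ((p : ℝ) / 2 ^ k) ((p + 1) / 2 ^ k)

lemma mem_dyadicIco {k p : ℕ} {x : ℝ} : x ∈ dyadicIco k p ↔ ⌊x * 2 ^ k⌋ = p := by
  rw [Int.floor_eq_iff, dyadicIco, mem_Ico, div_le_iff₀ (by positivity),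
    lt_div_iff₀ (by positivity)]
  push_cast
  rfl

lemma floor_mul_two_pow_of_le {a b : ℕ} (h : a ≤ b) (x : ℝ) :
    ⌊x * 2 ^ a⌋ = ⌊x * 2 ^ b⌋ / 2 ^ (b - a) := by
  have hx : x * 2 ^ a = x * 2 ^ b / ((2 ^ (b - a) : ℕ) : ℝ) := by
    rw [Nat.cast_pow, Nat.cast_ofNat, ← pow_sub_mul_pow 2 h]
    field_simp
  rw [hx, Int.floor_div_natCast]
  push_cast
  rfl

lemma dyadicIco_inter_of_le {a b : ℕ} (h : a ≤ b) (p q : ℕ) :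
    dyadicIco a p ∩ dyadicIco b q = if q / 2 ^ (b - a) = p then dyadicIco b q else ∅ := by
  ext x
  rw [mem_inter_iff, mem_dyadicIco (k := a), floor_mul_two_pow_of_le h x]
  split_ifs with hpq
  · refine ⟨And.right, fun hq => ⟨?_, hq⟩⟩
    rw [mem_dyadicIco.1 hq, ← hpq]
    push_cast
    rfl
  · refine iff_of_false (fun ⟨hp, hq⟩ => hpq ?_) (notMem_empty x)
    rw [mem_dyadicIco.1 hq] at hp
    exact_mod_cast hp

lemma measurableSet_dyadicIco (k p : ℕ) : MeasurableSet (dyadicIco k p) := measurableSet_Ico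

lemma volume_dyadicIco (k p : ℕ) : volume (dyadicIco k p) = ENNReal.ofReal ((2 ^ k)⁻¹) := by
  rw [dyadicIco, Real.volume_Ico, ← sub_div, add_sub_cancel_left, one_div]

lemma measureReal_dyadicIco_inter_of_le {a b : ℕ} (h : a ≤ b) (p q : ℕ) :
    volume.real (dyadicIco a p ∩ dyadicIco b q) =
      if q / 2 ^ (b - a) = p then ((2 : ℝ) ^ b)⁻¹ else 0 := by
  rw [dyadicIco_inter_of_le h]
  split_ifs
  · rw [measureReal_def, volume_dyadicIco, ENNReal.toReal_ofReal (by positivity)]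
  · simp

lemma integrable_indicator_one_dyadicIco_inter (a b p q : ℕ) :
    Integrable ((dyadicIco a p ∩ dyadicIco b q).indicator (1 : ℝ → ℝ)) := by
  refine (integrable_indicator_iff
    ((measurableSet_dyadicIco ..).inter (measurableSet_dyadicIco ..))).2 (integrableOn_const ?_)
  refine ((measure_mono inter_subset_left).trans_lt ?_).ne
  rw [volume_dyadicIco]
  exact ENNReal.ofReal_lt_top

lemma dyadicIco_subset_Icc {k p : ℕ} (hp : p < 2 ^ k) : dyadicIco k p ⊆ Icc 0 1 := by
  have hp' : (p : ℝ) + 1 ≤ 2 ^ k := by exact_mod_cast hp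
  refine Ico_subset_Icc_self.trans (Icc_subset_Icc (by positivity) ?_)
  rwa [div_le_one (by positivity)]

lemma haar1_eq_indicator_sub (k j : ℕ) :
    haar1 k j = (dyadicIco (k + 1) (2 * j + 1)).indicator 1 -
      (dyadicIco (k + 1) (2 * j)).indicator 1 := by
  have left : dyadicIco (k + 1) (2 * j) = Ico ((j : ℝ) / 2 ^ k) ((j + 1 / 2) / 2 ^ k) := by
    simp only [dyadicIco]; push_cast; congr 1 <;> field_simp <;> ring
  have right :
      dyadicIco (k + 1) (2 * j + 1) = Ico (((j : ℝ) + 1 / 2) / 2 ^ k) ((j + 1) / 2 ^ k) := by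
    simp only [dyadicIco]; push_cast; congr 1 <;> field_simp <;> ring
  funext x
  rw [left, right]
  simp only [haar1, indicator, mem_Ico, Pi.sub_apply]
  split_ifs <;> first | (rename_i h₁ h₂; linarith [h₁.2, h₂.1]) | norm_num

lemma integral_haar1_mul_haar1_of_le {k k' : ℕ} (h : k ≤ k') (j j' : ℕ) :
    ∫ x, haar1 k j x * haar1 k' j' x = if k = k' ∧ j = j' then ((2 : ℝ) ^ k)⁻¹ else 0 := by
  have hint := integrable_indicator_one_dyadicIco_inter
  change ∫ x, (haar1 k j * haar1 k' j') x = _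
  simp only [haar1_eq_indicator_sub, sub_mul, mul_sub, ← inter_indicator_one]
  rw [integral_sub' ((hint ..).sub (hint ..)) ((hint ..).sub (hint ..)),
    integral_sub' (hint ..) (hint ..), integral_sub' (hint ..) (hint ..)]
  simp only [measureReal_dyadicIco_inter_of_le (Nat.succ_le_succ h),
    integral_indicator_one ((measurableSet_dyadicIco ..).inter (measurableSet_dyadicIco ..))]
  obtain rfl | hlt := h.eq_or_lt
  · by_cases hj : j = j'
    · subst hj
      simp [pow_succ]
      ring
    · simp [hj, Ne.symm hj, show 2 * j' + 1 ≠ 2 * j by omega,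
        show 2 * j' ≠ 2 * j + 1 by omega]
  -- Both halves of the finer interval lie in the same half of the coarser one, so the four
  -- terms cancel in pairs.
  · obtain ⟨m, rfl⟩ := Nat.exists_eq_add_of_lt hlt
    have hdiv : (2 * j' + 1) / 2 ^ (m + 1) = 2 * j' / 2 ^ (m + 1) := by
      rw [pow_succ', ← Nat.div_div_eq_div_mul, ← Nat.div_div_eq_div_mul,
        show (2 * j' + 1) / 2 = j' by omega, show 2 * j' / 2 = j' by omega]
    rw [show k + m + 1 + 1 - (k + 1) = m + 1 by omega, hdiv, sub_self,
      if_neg (by omega)]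

lemma integral_haar1_mul_haar1 (k j k' j' : ℕ) :
    ∫ x, haar1 k j x * haar1 k' j' x = if k = k' ∧ j = j' then ((2 : ℝ) ^ k)⁻¹ else 0 := by
  rcases le_total k k' with h | h
  · exact integral_haar1_mul_haar1_of_le h j j'
  · simp_rw [mul_comm (haar1 k j _), integral_haar1_mul_haar1_of_le h j' j, eq_comm (a := k'),
      eq_comm (a := j')]
    split_ifs with hkj
    · rw [hkj.1]
    · rfl

lemma measurable_haar1 (k j : ℕ) : Measurable (haar1 k j) := by
  rw [haar1_eq_indicator_sub]
  exact (measurable_const.indicator (measurableSet_dyadicIco _ _)).sub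
    (measurable_const.indicator (measurableSet_dyadicIco _ _))

lemma abs_haar1_le_one (k j : ℕ) (x : ℝ) : |haar1 k j x| ≤ 1 := by
  unfold haar1
  split_ifs <;> norm_num

lemma haar1_eq_zero_of_notMem_Icc {k j : ℕ} (hj : j < 2 ^ k) {x : ℝ} (hx : x ∉ Icc 0 1) :
    haar1 k j x = 0 := by
  have hsub : ∀ p < 2 ^ (k + 1), x ∉ dyadicIco (k + 1) p := fun p hp hmem =>
    hx (dyadicIco_subset_Icc hp hmem)
  rw [haar1_eq_indicator_sub, Pi.sub_apply, indicator_of_notMem (hsub _ (by omega)),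
    indicator_of_notMem (hsub _ (by omega)), sub_zero]

section HaarR

variable {d : ℕ}

lemma measurable_haarR (R : (Fin d → ℕ) × (Fin d → ℕ)) : Measurable (haarR R) :=
  Finset.measurable_prod _ fun i _ => (measurable_haar1 _ _).comp (measurable_pi_apply i)

lemma abs_haarR_le_one (R : (Fin d → ℕ) × (Fin d → ℕ)) (x : Fin d → ℝ) : |haarR R x| ≤ 1 := by
  rw [haarR, Finset.abs_prod]
  exact Finset.prod_le_one (fun i _ => abs_nonneg _) fun i _ => abs_haar1_le_one _ _ _

lemma haarR_eq_zero_of_notMem_unitCube {R : (Fin d → ℕ) × (Fin d → ℕ)}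
    (hR : ∀ i, R.2 i < 2 ^ R.1 i) {x : Fin d → ℝ} (hx : x ∉ unitCube d) : haarR R x = 0 := by
  obtain ⟨i, -, hi⟩ := not_forall₂.1 hx
  exact Finset.prod_eq_zero (Finset.mem_univ i) (haar1_eq_zero_of_notMem_Icc (hR i) hi)

lemma volume_unitCube : volume (unitCube d) = 1 := by
  rw [unitCube, volume_pi_pi]
  simp

instance : IsProbabilityMeasure (volume.restrict (unitCube d)) :=
  ⟨by rw [Measure.restrict_apply_univ, volume_unitCube]⟩

lemma integral_unitCube_haarR_mul_haarR {R S : (Fin d → ℕ) × (Fin d → ℕ)}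
    (hR : ∀ i, R.2 i < 2 ^ R.1 i) :
    ∫ x in unitCube d, haarR R x * haarR S x =
      if R = S then ((2 : ℝ) ^ ∑ i, R.1 i)⁻¹ else 0 := by
  rw [setIntegral_eq_integral_of_forall_compl_eq_zero fun x hx => by
    rw [haarR_eq_zero_of_notMem_unitCube hR hx, zero_mul]]
  simp_rw [haarR, ← Finset.prod_mul_distrib]
  rw [integral_fintype_prod_volume_eq_prod
    (fun i t => haar1 (R.1 i) (R.2 i) t * haar1 (S.1 i) (S.2 i) t)]
  simp_rw [integral_haar1_mul_haar1]
  split_ifs with hRS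
  · simp [hRS, Finset.prod_pow_eq_pow_sum]
  · obtain ⟨i, hi⟩ : ∃ i, ¬(R.1 i = S.1 i ∧ R.2 i = S.2 i) := by
      contrapose! hRS
      exact Prod.ext (funext fun i => (hRS i).1) (funext fun i => (hRS i).2)
    exact Finset.prod_eq_zero (Finset.mem_univ i) (if_neg hi)

lemma integral_unitCube_sq_sum_haarR (s : Finset ((Fin d → ℕ) × (Fin d → ℕ)))
    (hs : ∀ R ∈ s, ∀ i, R.2 i < 2 ^ R.1 i) (α : (Fin d → ℕ) × (Fin d → ℕ) → ℝ) :
    ∫ x in unitCube d, (∑ R ∈ s, α R * haarR R x) ^ 2 =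
      ∑ R ∈ s, α R ^ 2 * ((2 : ℝ) ^ ∑ i, R.1 i)⁻¹ := by
  have hint : ∀ R S, Integrable (fun x => α R * α S * (haarR R x * haarR S x))
      (volume.restrict (unitCube d)) := fun R S =>
    (Integrable.of_bound ((measurable_haarR R).mul (measurable_haarR S)).aestronglyMeasurable 1
      (ae_of_all _ fun x => by
        rw [Pi.mul_apply, Real.norm_eq_abs, abs_mul]
        exact mul_le_one₀ (abs_haarR_le_one R x) (abs_nonneg _)
          (abs_haarR_le_one S x))).const_mul _
  simp_rw [sq, Finset.sum_mul_sum, mul_mul_mul_comm]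
  rw [integral_finsetSum _ fun R _ => integrable_finsetSum _ fun S _ => hint R S]
  refine Finset.sum_congr rfl fun R hR => ?_
  simp_rw [integral_finsetSum _ fun S _ => hint R S, integral_const_mul,
    integral_unitCube_haarR_mul_haarR (hs R hR), mul_ite, mul_zero, Finset.sum_ite_eq,
    if_pos hR]

end HaarR

lemma integral_sq_le_toReal_eLpNorm_top_sq {Ω : Type*} {mΩ : MeasurableSpace Ω} {μ : Measure Ω}
    [IsProbabilityMeasure μ] {f : Ω → ℝ} (hf : eLpNorm f ⊤ μ ≠ ⊤) :
    ∫ x, f x ^ 2 ∂μ ≤ (eLpNorm f ⊤ μ).toReal ^ 2 := by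
  have hbound : ∀ᵐ x ∂μ, f x ^ 2 ≤ (eLpNorm f ⊤ μ).toReal ^ 2 := by
    filter_upwards [enorm_ae_le_eLpNormEssSup f μ] with x hx
    rw [← eLpNorm_exponent_top] at hx
    have habs : |f x| ≤ (eLpNorm f ⊤ μ).toReal := by
      simpa [toReal_enorm] using ENNReal.toReal_mono hf hx
    rw [← sq_abs]
    exact pow_le_pow_left₀ (abs_nonneg _) habs 2
  calc ∫ x, f x ^ 2 ∂μ ≤ ∫ _, (eLpNorm f ⊤ μ).toReal ^ 2 ∂μ :=
        integral_mono_of_nonneg (ae_of_all _ fun x => sq_nonneg _) (integrable_const _) hbound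
    _ = (eLpNorm f ⊤ μ).toReal ^ 2 := by simp

section Counting

open Finset

lemma card_antidiagonalTuple_succ_le (e n : ℕ) :
    #(Nat.antidiagonalTuple (e + 1) n) ≤ (n + 1) ^ e := by
  calc #(Nat.antidiagonalTuple (e + 1) n)
      ≤ #((Fintype.piFinset fun _ : Fin e => range (n + 1)).image
          fun t => Fin.cons (n - ∑ i, t i) t) := card_le_card ?_
    _ ≤ #(Fintype.piFinset fun _ : Fin e => range (n + 1)) := card_image_le
    _ = (n + 1) ^ e := by simp
  intro k hk
  rw [Nat.mem_antidiagonalTuple, Fin.sum_univ_succ] at hk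
  refine mem_image.2 ⟨Fin.tail k, Fintype.mem_piFinset.2 fun i => mem_range.2 ?_, ?_⟩
  · have := single_le_sum (fun i _ => Nat.zero_le (Fin.tail k i)) (mem_univ i)
    simp only [Fin.tail] at this ⊢
    omega
  · rw [show n - ∑ i, Fin.tail k i = k 0 by simp only [Fin.tail]; omega, Fin.cons_self_tail]

lemma rectsEq_eq_filter (d n : ℕ) :
    rectsEq d n = (rectsGe d n).filter fun R => ∑ i, R.1 i = n := by
  ext R
  simp only [rectsEq, rectsGe, mem_filter]
  exact ⟨fun ⟨h, hsum, hR⟩ => ⟨⟨h, hsum.le, hR⟩, hsum⟩, fun ⟨⟨h, _, hR⟩, hsum⟩ => ⟨h, hsum, hR⟩⟩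

lemma card_rectsEq_le (d n : ℕ) : #(rectsEq d n) ≤ #(Nat.antidiagonalTuple d n) * 2 ^ n := by
  have hfst : ∀ R ∈ rectsEq d n, R.1 ∈ Nat.antidiagonalTuple d n := fun R hR => by
    rw [Nat.mem_antidiagonalTuple]
    exact (mem_filter.1 hR).2.1
  rw [card_eq_sum_card_fiberwise hfst, ← smul_eq_mul]
  refine sum_le_card_nsmul _ _ _ fun k hk => ?_
  calc #((rectsEq d n).filter fun R => R.1 = k)
      ≤ #(Fintype.piFinset fun i => range (2 ^ k i)) := by
        refine card_le_card_of_injOn Prod.snd (fun R hR => ?_) fun R hR S hS hRS => ?_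
        · obtain ⟨hmem, rfl⟩ := mem_filter.1 hR
          exact Fintype.mem_piFinset.2 fun i => mem_range.2 ((mem_filter.1 hmem).2.2 i)
        · exact Prod.ext ((mem_filter.1 hR).2.trans (mem_filter.1 hS).2.symm) hRS
    _ = 2 ^ n := by
        rw [Fintype.card_piFinset]
        simp only [card_range]
        rw [prod_pow_eq_pow_sum, (Nat.mem_antidiagonalTuple.1 hk)]

end Counting

open Finset in
lemma sq_sum_abs_mul_rectsEq_le (d n : ℕ) (α : (Fin d → ℕ) × (Fin d → ℕ) → ℝ) :
    (∑ R ∈ rectsEq d n, |α R| * ((2 : ℝ) ^ ∑ i, R.1 i)⁻¹) ^ 2 ≤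
      #(Nat.antidiagonalTuple d n) * ∑ R ∈ rectsEq d n, α R ^ 2 * ((2 : ℝ) ^ ∑ i, R.1 i)⁻¹ := by
  set w : ℝ := ((2 : ℝ) ^ n)⁻¹
  have hw : ∀ R ∈ rectsEq d n, ((2 : ℝ) ^ ∑ i, R.1 i)⁻¹ = w := fun R hR => by
    rw [(mem_filter.1 hR).2.1]
  have hcard : #(rectsEq d n) * w ≤ #(Nat.antidiagonalTuple d n) := by
    rw [mul_inv_le_iff₀ (by positivity)]
    exact_mod_cast card_rectsEq_le d n
  have hsum : ∀ g : (Fin d → ℕ) × (Fin d → ℕ) → ℝ,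
      ∑ R ∈ rectsEq d n, g R * ((2 : ℝ) ^ ∑ i, R.1 i)⁻¹ = (∑ R ∈ rectsEq d n, g R) * w :=
    fun g => by rw [sum_mul]; exact sum_congr rfl fun R hR => by rw [hw R hR]
  rw [hsum, hsum]
  calc ((∑ R ∈ rectsEq d n, |α R|) * w) ^ 2
      = (∑ R ∈ rectsEq d n, |α R|) ^ 2 * w * w := by ring
    _ ≤ #(rectsEq d n) * (∑ R ∈ rectsEq d n, |α R| ^ 2) * w * w := by
        gcongr
        exact sq_sum_le_card_mul_sum_sq
    _ = #(rectsEq d n) * w * ((∑ R ∈ rectsEq d n, α R ^ 2) * w) := by simp only [sq_abs]; ring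
    _ ≤ #(Nat.antidiagonalTuple d n) * ((∑ R ∈ rectsEq d n, α R ^ 2) * w) := by gcongr

lemma sum_sq_mul_rectsEq_le_toReal_eLpNorm_top_sq {d n : ℕ} (α : (Fin d → ℕ) × (Fin d → ℕ) → ℝ)
    (hf : eLpNorm (fun x => ∑ R ∈ rectsGe d n, α R * haarR R x) ⊤
      (volume.restrict (unitCube d)) ≠ ⊤) :
    ∑ R ∈ rectsEq d n, α R ^ 2 * ((2 : ℝ) ^ ∑ i, R.1 i)⁻¹ ≤
      (eLpNorm (fun x => ∑ R ∈ rectsGe d n, α R * haarR R x) ⊤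
        (volume.restrict (unitCube d))).toReal ^ 2 := calc
  _ ≤ ∑ R ∈ rectsGe d n, α R ^ 2 * ((2 : ℝ) ^ ∑ i, R.1 i)⁻¹ :=
    Finset.sum_le_sum_of_subset_of_nonneg (rectsEq_eq_filter _ _ ▸ Finset.filter_subset _ _)
      fun _ _ _ => by positivity
  _ = ∫ x in unitCube d, (∑ R ∈ rectsGe d n, α R * haarR R x) ^ 2 :=
    (integral_unitCube_sq_sum_haarR _ (fun _ hR => (Finset.mem_filter.1 hR).2.2) α).symm
  _ ≤ _ := integral_sq_le_toReal_eLpNorm_top_sq hf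

/-- **The "trivial" bound (Lemma 2.1): Cauchy–Schwarz estimate in dimension `d`.** -/
theorem trivial_hyperbolic_bound (d : ℕ) (hd : 2 ≤ d) :
    ∃ C : ℝ, 0 < C ∧ ∀ n : ℕ, 1 ≤ n → ∀ α : ((Fin d → ℕ) × (Fin d → ℕ)) → ℝ,
      ENNReal.ofReal (∑ R ∈ rectsEq d n, |α R| * (2 : ℝ) ^ (-((∑ i, R.1 i : ℕ) : ℝ))) ≤
        ENNReal.ofReal (C * (n : ℝ) ^ (((d : ℝ) - 1) / 2)) *
          eLpNorm (fun x => ∑ R ∈ rectsGe d n, α R * haarR R x) ⊤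
            (volume.restrict (unitCube d)) := by
  obtain ⟨e, rfl⟩ : ∃ e, d = e + 1 := ⟨d - 1, by omega⟩
  -- `C = 2 ^ ((d - 1) / 2)` absorbs `n + 1 ≤ 2 * n`.
  refine ⟨2 ^ ((e : ℝ) / 2), by positivity, fun n hn α => ?_⟩
  have hn' : (1 : ℝ) ≤ n := by exact_mod_cast hn
  set f := fun x => ∑ R ∈ rectsGe (e + 1) n, α R * haarR R x
  by_cases hM : eLpNorm f ⊤ (volume.restrict (unitCube (e + 1))) = ⊤
  · rw [hM, ENNReal.mul_top (ENNReal.ofReal_pos.2 (by positivity)).ne']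
    exact le_top
  set M := (eLpNorm f ⊤ (volume.restrict (unitCube (e + 1)))).toReal
  have hC : (2 ^ ((e : ℝ) / 2) * (n : ℝ) ^ ((((e + 1 : ℕ) : ℝ) - 1) / 2)) ^ 2 = (2 * n) ^ e := by
    rw [show (((e + 1 : ℕ) : ℝ) - 1) / 2 = (e : ℝ) / 2 by push_cast; ring,
      ← Real.mul_rpow zero_le_two (by positivity), ← Real.rpow_mul_natCast (by positivity),
      show (e : ℝ) / 2 * ((2 : ℕ) : ℝ) = e by push_cast; ring, Real.rpow_natCast]
  rw [← ENNReal.ofReal_toReal hM, ← ENNReal.ofReal_mul (by positivity)]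
  refine ENNReal.ofReal_le_ofReal (le_of_pow_le_pow_left₀ two_ne_zero (by positivity) ?_)
  simp_rw [Real.rpow_neg zero_le_two, Real.rpow_natCast]
  calc _ ≤ _ := sq_sum_abs_mul_rectsEq_le _ _ _
    _ ≤ (n + 1) ^ e * M ^ 2 := by
      gcongr
      · exact_mod_cast card_antidiagonalTuple_succ_le e n
      · exact sum_sq_mul_rectsEq_le_toReal_eLpNorm_top_sq α hM
    _ ≤ (2 * n) ^ e * M ^ 2 := by gcongr; linarith
    _ = _ := by rw [← hC]; ring
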